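/- arXiv:1001.0618 — 8 statements merged into one kernel-verified Lean document; each statement's English description precedes it below -/
import Mathlib

section
/- Define polynomials \Psi_b^k(t) for 0 ≤ k ≤ b by the recursion \Psi_{b+1}^k(t) = (t^3 - t^2) d/dt \Psi_b^{k-1}(t) + (t^2 - t) d/dt \Psi_b^k(t) (with the convention \Psi_b^{-1} = 0 and \Psi_b^{b+1} = 0), and initial condition \Psi_0^0(t) = t - 1. Then \hat{\Psi}_b(t;\tau) = \sum_{k=0}^{b} \tau^k/(\tau+1)^{b+1} \Psi_b^k(t), where \hat{\Psi}_b is defined by \hat{\Psi}_0(t;\tau) = (t-1)/(\tau+1) and \hat{\Psi}_{n+1}(t;\tau) = ((t^2-t)(t\tau+1)/(\tau+1)) d/dt \hat{\Psi}_n(t;\tau). -/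
open Polynomial

/-- With `Ψ_b^k ∈ ℚ[t]` defined by
`Ψ_{b+1}^k = (t³-t²)(Ψ_b^{k-1})' + (t²-t)(Ψ_b^k)'`, `Ψ_0^0 = t-1`, and `Ψ_b^k = 0`
unless `0 ≤ k ≤ b`, the polynomials `Ψ̂_b(t;τ)` (from the recursion
`Ψ̂_0 = (t-1)/(τ+1)`, `Ψ̂_{n+1} = ((t²-t)(tτ+1)/(τ+1)) dΨ̂_n/dt`) satisfy
`Ψ̂_b = ∑_{k=0}^b (τ^k/(τ+1)^(b+1)) Ψ_b^k`. -/
theorem psiHat_eq_sum_psi (Ψ : ℕ → ℤ → Polynomial ℚ)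
    (hΨ00 : Ψ 0 0 = X - 1)
    (hΨzero : ∀ (b : ℕ) (k : ℤ), (k < 0 ∨ (b : ℤ) < k) → Ψ b k = 0)
    (hΨrec : ∀ (b : ℕ) (k : ℤ), Ψ (b + 1) k =
      (X ^ 3 - X ^ 2) * derivative (Ψ b (k - 1)) + (X ^ 2 - X) * derivative (Ψ b k))
    (Ψhat : ℕ → Polynomial (RatFunc ℚ))
    (h0 : Ψhat 0 = (X - 1) * C ((RatFunc.X + 1)⁻¹))
    (hrec : ∀ n, Ψhat (n + 1) =
      (X ^ 2 - X) * (C (RatFunc.X) * X + 1) * C ((RatFunc.X + 1)⁻¹) *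
        derivative (Ψhat n)) :
    ∀ b : ℕ, Ψhat b = ∑ k ∈ Finset.range (b + 1),
      C (RatFunc.X ^ k / (RatFunc.X + 1) ^ (b + 1)) *
        (Ψ b (k : ℤ)).map (algebraMap ℚ (RatFunc ℚ)) := by
  set φ := algebraMap ℚ (RatFunc ℚ)
  set τ := (RatFunc.X : RatFunc ℚ)
  intro b
  induction b with
  | zero =>
      rw [h0, Finset.sum_range_one]
      simp only [Nat.cast_zero, hΨ00, pow_zero, pow_one, Polynomial.map_sub, Polynomial.map_one,
        Polynomial.map_X, one_div]
      ring_nf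
  | succ b ih =>
      -- mapped recursion
      have hmap : ∀ k : ℤ, ((Ψ (b+1) k).map φ)
          = (X^3 - X^2) * derivative ((Ψ b (k-1)).map φ)
            + (X^2 - X) * derivative ((Ψ b k).map φ) := by
        intro k
        rw [hΨrec]
        simp [Polynomial.map_add, Polynomial.map_mul, Polynomial.map_sub,
          Polynomial.map_pow, derivative_map]
      calc Ψhat (b+1)
          = ∑ k ∈ Finset.range (b+1),
              (C (τ ^ (k+1) / (τ+1)^(b+2)) * ((X^3-X^2) * derivative ((Ψ b (k:ℤ)).map φ))
               + C (τ ^ k / (τ+1)^(b+2)) * ((X^2-X) * derivative ((Ψ b (k:ℤ)).map φ))) := by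
            rw [hrec, ih, derivative_sum, Finset.mul_sum]
            refine Finset.sum_congr rfl fun k hk => ?_
            rw [derivative_C_mul]
            have h1 : τ ^ (k+1) / (τ+1)^(b+2) = τ * (τ ^ k / (τ+1)^(b+1) * (τ+1)⁻¹) := by
              rw [div_eq_mul_inv, div_eq_mul_inv, pow_succ τ, pow_succ (τ+1), mul_inv]
              ring
            have h2 : τ ^ k / (τ+1)^(b+2) = τ ^ k / (τ+1)^(b+1) * (τ+1)⁻¹ := by
              rw [div_eq_mul_inv, div_eq_mul_inv, pow_succ (τ+1), mul_inv]
              ring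
            rw [h1, h2]
            simp only [map_mul]
            ring
        _ = (∑ k ∈ Finset.range (b+1),
              C (τ ^ (k+1) / (τ+1)^(b+2)) * ((X^3-X^2) * derivative ((Ψ b (k:ℤ)).map φ)))
            + ∑ k ∈ Finset.range (b+1),
              C (τ ^ k / (τ+1)^(b+2)) * ((X^2-X) * derivative ((Ψ b (k:ℤ)).map φ)) := by
            rw [Finset.sum_add_distrib]
        _ = ∑ k ∈ Finset.range (b+2),
              C (τ ^ k / (τ+1)^(b+2)) * (Ψ (b+1) (k:ℤ)).map φ := by
            rw [show b + 1 + 1 = b + 2 from rfl]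
            have expand : ∑ k ∈ Finset.range (b+2),
                C (τ ^ k / (τ+1)^(b+2)) * (Ψ (b+1) (k:ℤ)).map φ
              = ∑ k ∈ Finset.range (b+2),
                (C (τ ^ k / (τ+1)^(b+2)) * ((X^3-X^2) * derivative ((Ψ b ((k:ℤ)-1)).map φ))
                 + C (τ ^ k / (τ+1)^(b+2)) * ((X^2-X) * derivative ((Ψ b (k:ℤ)).map φ))) :=
              Finset.sum_congr rfl fun k _ => by rw [hmap, mul_add]
            rw [expand, Finset.sum_add_distrib]
            congr 1
            · have hz : (Ψ b ((0:ℤ) - 1)).map φ = 0 := by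
                rw [hΨzero b _ (Or.inl (by norm_num))]; simp
              conv_rhs => rw [Finset.sum_range_succ']
              simp only [Nat.cast_zero, hz, derivative_zero, mul_zero, add_zero]
              refine Finset.sum_congr rfl fun k hk => ?_
              have hcast : (((k+1 : ℕ) : ℤ) - 1) = (k:ℤ) := by push_cast; ring
              rw [hcast]
            · have hz : (Ψ b (((b+1 : ℕ)) : ℤ)).map φ = 0 := by
                rw [hΨzero b _ (Or.inr (by push_cast; linarith))]; simp
              conv_rhs => rw [Finset.sum_range_succ]
              rw [hz]
              simp
        _ = ∑ k ∈ Finset.range (b + 1 + 1),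
              C (τ ^ k / (τ+1) ^ (b + 1 + 1)) * (Ψ (b+1) (k:ℤ)).map φ := rfl
end

section
/- Let \hat{\xi}_b(t) be defined by \hat{\xi}_0(t) = t-1 and \hat{\xi}_{b+1}(t) = (t^3 - t^2) d/dt \hat{\xi}_b(t). Then for every b ≥ 0, the coefficient of t^{2b+1} in \hat{\xi}_b(t) equals (2b-1)!! (with (-1)!! = 1), and the coefficient of t^{b+1} in \hat{\xi}_b(t) equals (-1)^b b!. -/
open Polynomial

lemma key_coeff (q : Polynomial ℚ) (n : ℕ) :
    ((X ^ 3 - X ^ 2) * q).coeff n =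
      (if 3 ≤ n then q.coeff (n - 3) else 0) - (if 2 ≤ n then q.coeff (n - 2) else 0) := by
  rw [sub_mul, coeff_sub, mul_comm (X ^ 3 : Polynomial ℚ) q, mul_comm (X ^ 2 : Polynomial ℚ) q,
    coeff_mul_X_pow', coeff_mul_X_pow']

lemma df_step (b : ℕ) :
    Nat.doubleFactorial (2 * b + 1) = (2 * b + 1) * Nat.doubleFactorial (2 * b - 1) := by
  cases b with
  | zero => rfl
  | succ n =>
    have h : 2 * (n + 1) + 1 = (2 * n + 1) + 2 := by ring
    rw [h, Nat.doubleFactorial_add_two]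
    have h2 : 2 * (n + 1) - 1 = 2 * n + 1 := by omega
    rw [h2]

/-- For `ξ̂_0 = t-1`, `ξ̂_{b+1} = (t³-t²) ξ̂_b'` in `ℚ[t]`,
the coefficient of `t^{2b+1}` in `ξ̂_b` is `(2b-1)!!` (with `(-1)!! = 1`, via truncated
subtraction) and the coefficient of `t^{b+1}` is `(-1)^b b!`. -/
theorem xi_top_and_bottom_coeff (ξ : ℕ → Polynomial ℚ)
    (hξ0 : ξ 0 = X - 1)
    (hξ : ∀ b, ξ (b + 1) = (X ^ 3 - X ^ 2) * derivative (ξ b)) :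
    ∀ b, (ξ b).coeff (2 * b + 1) = (Nat.doubleFactorial (2 * b - 1) : ℚ) ∧
      (ξ b).coeff (b + 1) = (-1) ^ b * (Nat.factorial b : ℚ) := by
  suffices h : ∀ b, (∀ k, 1 ≤ k → k ≤ b → (ξ b).coeff k = 0) ∧
      (∀ k, 2 * b + 1 < k → (ξ b).coeff k = 0) ∧
      (ξ b).coeff (2 * b + 1) = (Nat.doubleFactorial (2 * b - 1) : ℚ) ∧
      (ξ b).coeff (b + 1) = (-1) ^ b * (Nat.factorial b : ℚ) by
    exact fun b => ⟨(h b).2.2.1, (h b).2.2.2⟩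
  intro b
  induction b with
  | zero =>
    refine ⟨fun k hk1 hk2 => absurd (hk1.trans hk2) (by norm_num), ?_, ?_, ?_⟩
    · intro k hk
      rw [hξ0, coeff_sub, coeff_X, coeff_one, if_neg (by omega), if_neg (by omega)]
      ring
    · simp [hξ0, coeff_sub, coeff_X, coeff_one, Nat.doubleFactorial]
    · simp [hξ0, coeff_sub, coeff_X, coeff_one, Nat.factorial]
  | succ b ih =>
    obtain ⟨hlow, hhigh, htop, hbot⟩ := ih
    have hd : ∀ n, (ξ (b + 1)).coeff n =
        (if 3 ≤ n then (derivative (ξ b)).coeff (n - 3) else 0) -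
        (if 2 ≤ n then (derivative (ξ b)).coeff (n - 2) else 0) := by
      intro n
      rw [hξ b, key_coeff]
    refine ⟨?_, ?_, ?_, ?_⟩
    · -- low coefficients vanish
      intro k hk1 hk2
      rw [hd]
      rcases lt_or_ge k 3 with h3 | h3
      · interval_cases k
        · norm_num
        · rw [if_neg (by omega), if_pos le_rfl, coeff_derivative]
          rw [show (2 : ℕ) - 2 = 0 from rfl, show (0 : ℕ) + 1 = 1 from rfl,
            hlow 1 le_rfl (by omega)]
          ring
      · rw [if_pos h3, if_pos (by omega), coeff_derivative, coeff_derivative,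
          hlow (k - 3 + 1) (by omega) (by omega), hlow (k - 2 + 1) (by omega) (by omega)]
        ring
    · -- high coefficients vanish
      intro k hk
      rw [hd, if_pos (by omega), if_pos (by omega), coeff_derivative, coeff_derivative]
      rw [hhigh (k - 3 + 1) (by omega), hhigh (k - 2 + 1) (by omega)]
      ring
    · -- top coefficient
      have hn : 2 * (b + 1) + 1 = 2 * b + 3 := by ring
      rw [hn, hd, if_pos (by omega), if_pos (by omega), coeff_derivative, coeff_derivative]
      have e1 : 2 * b + 3 - 3 = 2 * b := by omega
      have e2 : 2 * b + 3 - 2 = 2 * b + 1 := by omega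
      rw [e1, e2, htop, hhigh (2 * b + 1 + 1) (by omega)]
      have e3 : 2 * (b + 1) - 1 = 2 * b + 1 := by omega
      rw [e3, df_step]
      push_cast
      ring
    · -- bottom coefficient
      rcases Nat.eq_zero_or_pos b with rfl | hb
      · rw [hd, if_neg (by norm_num), if_pos (by norm_num), coeff_derivative]
        norm_num [hξ0, coeff_sub, coeff_X, coeff_one, Nat.factorial]
      · rw [hd, if_pos (by omega), if_pos (by omega), coeff_derivative, coeff_derivative]
        have e1 : b + 1 + 1 - 3 + 1 = b := by omega
        have e2 : b + 1 + 1 - 2 + 1 = b + 1 := by omega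
        rw [e1, e2, hlow b hb le_rfl, hbot]
        push_cast [Nat.factorial_succ]
        ring
end

section
/- Define f^{b-1}(b,i) to be the coefficient of t^i in the polynomial \Psi_b^{b-1}(t), where \Psi_b^k satisfy \Psi_{b+1}^k(t) = (t^3-t^2) d/dt \Psi_b^{k-1}(t) + (t^2-t) d/dt \Psi_b^k(t) with \Psi_0^0(t) = t-1 (and \Psi_b^k = 0 unless 0 ≤ k ≤ b). Then for b ≥ 1, the coefficient of the top term satisfies f^{b-1}(b, 2b) = \sum_{k=0}^{b-1} (2b-2)!! (2k+1)!! / (2k)!!. -/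
open Polynomial

private lemma coeff_aux (p q : Polynomial ℚ) (n : ℕ) :
    ((X^3 - X^2) * p + (X^2 - X) * q).coeff (n+3) =
      p.coeff n - p.coeff (n+1) + q.coeff (n+1) - q.coeff (n+2) := by
  have h3 : (X^3 * p).coeff (n+3) = p.coeff n := coeff_X_pow_mul p 3 n
  have h2 : (X^2 * p).coeff (n+3) = p.coeff (n+1) := by
    have := coeff_X_pow_mul p 2 (n+1); simpa [add_assoc] using this
  have h2' : (X^2 * q).coeff (n+3) = q.coeff (n+1) := by
    have := coeff_X_pow_mul q 2 (n+1); simpa [add_assoc] using this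
  have h1 : (X * q).coeff (n+3) = q.coeff (n+2) := by
    have := coeff_X_pow_mul q 1 (n+2); simpa using this
  simp only [sub_mul, coeff_add, coeff_sub, h3, h2, h2', h1]
  ring

private lemma dfac_odd (b : ℕ) :
    (Nat.doubleFactorial (2*b+1) : ℚ) = (2*b+1) * Nat.doubleFactorial (2*b-1) := by
  cases b with
  | zero => simp [Nat.doubleFactorial]
  | succ b =>
    have h : 2*(b+1)+1 = (2*b+1)+2 := by ring
    have h2 : 2*(b+1)-1 = 2*b+1 := by omega
    rw [h, h2, Nat.doubleFactorial]
    push_cast; ring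

/-- With `Ψ_b^k` as in the standard recursion
(`Ψ_{b+1}^k = (t³-t²)(Ψ_b^{k-1})' + (t²-t)(Ψ_b^k)'`, `Ψ_0^0 = t-1`, `Ψ_b^k = 0`
unless `0 ≤ k ≤ b`), for `b ≥ 1` the coefficient of `t^{2b}` in `Ψ_b^{b-1}` equals
`∑_{k=0}^{b-1} (2b-2)!! (2k+1)!! / (2k)!!`. -/
theorem psi_subdiag_top_coeff (Ψ : ℕ → ℤ → Polynomial ℚ)
    (hΨ00 : Ψ 0 0 = X - 1)
    (hΨzero : ∀ (b : ℕ) (k : ℤ), (k < 0 ∨ (b : ℤ) < k) → Ψ b k = 0)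
    (hΨrec : ∀ (b : ℕ) (k : ℤ), Ψ (b + 1) k =
      (X ^ 3 - X ^ 2) * derivative (Ψ b (k - 1)) + (X ^ 2 - X) * derivative (Ψ b k)) :
    ∀ b : ℕ, 1 ≤ b → (Ψ b ((b : ℤ) - 1)).coeff (2 * b) =
      ∑ k ∈ Finset.range b,
        (Nat.doubleFactorial (2 * b - 2) : ℚ) * (Nat.doubleFactorial (2 * k + 1) : ℚ) /
          (Nat.doubleFactorial (2 * k) : ℚ) := by
  -- degree bound: coeff of Ψ b k at n vanishes when n > b + k + 1
  have hdeg : ∀ (b : ℕ) (k : ℤ) (n : ℕ), (b : ℤ) + k + 1 < (n : ℤ) → (Ψ b k).coeff n = 0 := by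
    intro b
    induction b with
    | zero =>
      intro k n h
      rcases lt_trichotomy k 0 with hk | hk | hk
      · rw [hΨzero 0 k (Or.inl hk)]; simp
      · subst hk
        rw [hΨ00]
        have hn : 2 ≤ n := by exact_mod_cast (by omega : (2:ℤ) ≤ n)
        simp only [coeff_sub, coeff_X, coeff_one]
        rw [if_neg (by omega), if_neg (by omega)]
        ring
      · rw [hΨzero 0 k (Or.inr (by exact_mod_cast hk))]; simp
    | succ b ih =>
      intro k n h
      rcases lt_or_ge k 0 with hk | hk
      · rw [hΨzero (b+1) k (Or.inl hk)]; simp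
      rcases lt_or_ge ((b:ℤ)+1) k with hk2 | hk2
      · rw [hΨzero (b+1) k (Or.inr (by push_cast; exact hk2))]; simp
      -- now 0 ≤ k ≤ b+1, so n ≥ 3
      have hn3 : 3 ≤ n := by exact_mod_cast (by push_cast at h; omega : (3:ℤ) ≤ (n:ℤ))
      obtain ⟨m, rfl⟩ : ∃ m, n = m + 3 := ⟨n - 3, by omega⟩
      rw [hΨrec, coeff_aux]
      have e1 : (derivative (Ψ b (k-1))).coeff m = 0 := by
        rw [coeff_derivative, ih (k-1) (m+1) (by push_cast at h ⊢; omega)]; ring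
      have e2 : (derivative (Ψ b (k-1))).coeff (m+1) = 0 := by
        rw [coeff_derivative, ih (k-1) (m+2) (by push_cast at h ⊢; omega)]; ring
      have e3 : (derivative (Ψ b k)).coeff (m+1) = 0 := by
        rw [coeff_derivative, ih k (m+2) (by push_cast at h ⊢; omega)]; ring
      have e4 : (derivative (Ψ b k)).coeff (m+2) = 0 := by
        rw [coeff_derivative, ih k (m+3) (by push_cast at h ⊢; omega)]; ring
      rw [e1, e2, e3, e4]; ring
  -- diagonal leading coefficient
  have hdiag : ∀ b : ℕ, (Ψ b b).coeff (2*b+1) = (Nat.doubleFactorial (2*b-1) : ℚ) := by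
    intro b
    induction b with
    | zero => simp only [Nat.cast_zero]; rw [hΨ00]; simp [coeff_sub, coeff_X, coeff_one, Nat.doubleFactorial]
    | succ b ih =>
      have hrec := hΨrec b ((b : ℤ) + 1)
      have hz : Ψ b ((b:ℤ)+1) = 0 := hΨzero b _ (Or.inr (by omega))
      have hcast : ((b:ℤ)+1) = ((b+1 : ℕ) : ℤ) := by push_cast; ring
      rw [hcast] at hrec
      have hidx : 2*(b+1)+1 = (2*b) + 3 := by ring
      rw [hrec, hidx, coeff_aux]
      have hsimp : ((b:ℤ) + 1 - 1) = (b:ℤ) := by ring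
      rw [← hcast, hsimp, hz]
      have e2 : (derivative (Ψ b (b:ℤ))).coeff (2*b)
          = (2*b+1) * (Nat.doubleFactorial (2*b-1) : ℚ) := by
        rw [coeff_derivative, ih]; push_cast; ring
      have e3 : (derivative (Ψ b (b:ℤ))).coeff (2*b+1) = 0 := by
        rw [coeff_derivative, hdeg b b (2*b+2) (by push_cast; omega)]; ring
      rw [e2, e3]
      simp only [derivative_zero, coeff_zero]
      rw [show 2*(b+1)-1 = 2*b+1 from by omega, dfac_odd b]
      ring
  -- main induction
  intro b hb
  induction b, hb using Nat.le_induction with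
  | base =>
    have hrec := hΨrec 0 0
    have hz : Ψ 0 ((0:ℤ)-1) = 0 := hΨzero 0 _ (Or.inl (by omega))
    rw [hz, hΨ00] at hrec
    have hΨ10 : Ψ 1 (((1:ℕ) : ℤ) - 1) = X^2 - X := by
      rw [(by norm_num : ((1:ℕ):ℤ) - 1 = (0:ℤ)), hrec]
      simp [derivative_sub]
    rw [hΨ10]
    simp [coeff_sub, coeff_X_pow, coeff_X, Nat.doubleFactorial]
  | succ b hb ih =>
    have hrec := hΨrec b (b : ℤ)
    have hcast : ((b+1 : ℕ) : ℤ) - 1 = (b : ℤ) := by push_cast; ring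
    rw [show (2*(b+1)-2 : ℕ) = 2*b from by omega, hcast, hrec]
    have hidx : 2*(b+1) = (2*b-1) + 3 := by omega
    rw [hidx, coeff_aux]
    have hm1 : (2*b-1) + 1 = 2*b := by omega
    have hcastm : ((2*b-1 : ℕ) : ℚ) + 1 = ((2*b : ℕ) : ℚ) := by
      exact_mod_cast congrArg (Nat.cast : ℕ → ℚ) hm1
    have e1 : (derivative (Ψ b ((b:ℤ)-1))).coeff (2*b-1)
        = (2*b) * (Ψ b ((b:ℤ)-1)).coeff (2*b) := by
      rw [coeff_derivative, hm1, hcastm]; push_cast; ring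
    have e2 : (derivative (Ψ b ((b:ℤ)-1))).coeff ((2*b-1)+1) = 0 := by
      rw [hm1, coeff_derivative, hdeg b ((b:ℤ)-1) (2*b+1) (by push_cast; omega)]; ring
    have e3 : (derivative (Ψ b (b:ℤ))).coeff ((2*b-1)+1)
        = (2*b+1) * (Nat.doubleFactorial (2*b-1) : ℚ) := by
      rw [hm1, coeff_derivative, hdiag b]; push_cast; ring
    have e4 : (derivative (Ψ b (b:ℤ))).coeff ((2*b-1)+2) = 0 := by
      rw [(by omega : (2*b-1)+2 = 2*b+1), coeff_derivative,
        hdeg b (b:ℤ) (2*b+2) (by push_cast; omega)]; ring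
    rw [e1, e2, e3, e4, ih]
    -- now pure arithmetic with the sums
    rw [Finset.sum_range_succ]
    have hgen : ∀ m : ℕ, ((m+2).doubleFactorial : ℚ) = (m+2) * m.doubleFactorial := by
      intro m; rw [Nat.doubleFactorial]; push_cast; ring
    have hne : (Nat.doubleFactorial (2*b) : ℚ) ≠ 0 := by
      exact_mod_cast (Nat.doubleFactorial_pos (2*b)).ne'
    have hdf : (Nat.doubleFactorial (2*b) : ℚ)
        = (2*b) * (Nat.doubleFactorial (2*b-2) : ℚ) := by
      have h := hgen (2*b-2)
      rw [show (2*b-2)+2 = 2*b from by omega] at h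
      rw [h, Nat.cast_sub (by omega : 2 ≤ 2*b)]
      push_cast; ring
    have hlast : (Nat.doubleFactorial (2*b) : ℚ) * (Nat.doubleFactorial (2*b+1) : ℚ)
          / (Nat.doubleFactorial (2*b) : ℚ)
        = (2*b+1) * (Nat.doubleFactorial (2*b-1) : ℚ) := by
      rw [mul_comm, mul_div_assoc, div_self hne, mul_one, dfac_odd b]
    rw [hlast, Finset.mul_sum, sub_zero, sub_zero]
    congr 1
    apply Finset.sum_congr rfl
    intro k _
    rw [hdf]
    ring
end

section
/- With \Psi_b^k as in the standard recursion (\Psi_{b+1}^k = (t^3-t^2)(\Psi_b^{k-1})' + (t^2-t)(\Psi_b^k)', \Psi_0^0 = t-1), for b ≥ 1 the coefficient of t^b in \Psi_b^{b-1}(t) equals (-1)^b (b+1)!/2. -/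
open Polynomial

private lemma aux_dvd_deriv {p : ℚ[X]} {m : ℕ} (h : X^(m+1) ∣ p) : X^m ∣ derivative p := by
  rw [X_pow_dvd_iff] at *
  intro d hd
  rw [coeff_derivative, h (d+1) (by omega), zero_mul]

private lemma aux_coeff_comb (P Q : ℚ[X]) (n : ℕ) :
  ((X^3 - X^2) * derivative P + (X^2 - X) * derivative Q).coeff (n+3) =
    (n+1) * P.coeff (n+1) - (n+2) * P.coeff (n+2) + (n+2) * Q.coeff (n+2) - (n+3) * Q.coeff (n+3) := by
  have h3 : ((X:ℚ[X])^3 * derivative P).coeff (n+3) = (derivative P).coeff n := coeff_X_pow_mul _ _ _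
  have h2 : ((X:ℚ[X])^2 * derivative P).coeff (n+3) = (derivative P).coeff (n+1) := by
    have := coeff_X_pow_mul (derivative P) 2 (n+1)
    rwa [show n+1+2 = n+3 by omega] at this
  have h2' : ((X:ℚ[X])^2 * derivative Q).coeff (n+3) = (derivative Q).coeff (n+1) := by
    have := coeff_X_pow_mul (derivative Q) 2 (n+1)
    rwa [show n+1+2 = n+3 by omega] at this
  have h1 : ((X:ℚ[X]) * derivative Q).coeff (n+3) = (derivative Q).coeff (n+2) := by
    have := coeff_X_pow_mul (derivative Q) 1 (n+2)
    rwa [show n+2+1 = n+3 by omega, pow_one] at this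
  rw [sub_mul, sub_mul, coeff_add, coeff_sub, coeff_sub, h3, h2, h2', h1,
    coeff_derivative, coeff_derivative, coeff_derivative, coeff_derivative]
  push_cast; ring

/-- With `Ψ_b^k` as in the standard recursion
(`Ψ_{b+1}^k = (t³-t²)(Ψ_b^{k-1})' + (t²-t)(Ψ_b^k)'`, `Ψ_0^0 = t-1`, `Ψ_b^k = 0`
unless `0 ≤ k ≤ b`), for `b ≥ 1` the coefficient of `t^b` in `Ψ_b^{b-1}` equals
`(-1)^b (b+1)!/2`. -/
theorem psi_subdiag_bottom_coeff (Ψ : ℕ → ℤ → Polynomial ℚ)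
    (hΨ00 : Ψ 0 0 = X - 1)
    (hΨzero : ∀ (b : ℕ) (k : ℤ), (k < 0 ∨ (b : ℤ) < k) → Ψ b k = 0)
    (hΨrec : ∀ (b : ℕ) (k : ℤ), Ψ (b + 1) k =
      (X ^ 3 - X ^ 2) * derivative (Ψ b (k - 1)) + (X ^ 2 - X) * derivative (Ψ b k)) :
    ∀ b : ℕ, 1 ≤ b → (Ψ b ((b : ℤ) - 1)).coeff b =
      (-1) ^ b * (Nat.factorial (b + 1) : ℚ) / 2 := by
  -- explicit small values
  have h10 : Ψ 1 0 = X^2 - X := by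
    rw [hΨrec 0 0, hΨzero 0 (0-1) (Or.inl (by norm_num)), hΨ00]
    simp
  have h11 : Ψ 1 1 = X^3 - X^2 := by
    rw [hΨrec 0 1, show (1:ℤ)-1 = 0 from by norm_num, hΨ00, hΨzero 0 1 (Or.inr (by norm_num))]
    simp
  -- divisibility: X^m ∣ Ψ b k whenever m ≤ k+1, b ≥ 1
  have hdvd : ∀ b : ℕ, 1 ≤ b → ∀ k : ℤ, ∀ m : ℕ, (m:ℤ) ≤ k + 1 → (X:ℚ[X])^m ∣ Ψ b k := by
    intro b
    induction b with
    | zero => intro h; omega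
    | succ b ih =>
      intro _ k m hm
      by_cases hb : b = 0
      · subst hb
        rcases lt_trichotomy k 0 with hk | hk | hk
        · rw [hΨzero 1 k (Or.inl hk)]; exact dvd_zero _
        · subst hk
          rw [h10]
          have hm' : m ≤ 1 := by push_cast at hm; omega
          interval_cases m
          · simp
          · exact ⟨X - 1, by ring⟩
        · by_cases hk1 : k = 1
          · subst hk1
            rw [h11]
            refine dvd_trans (pow_dvd_pow X (show m ≤ 2 by omega)) ⟨X - 1, by ring⟩
          · rw [hΨzero 1 k (Or.inr (by push_cast; omega))]; exact dvd_zero _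
      · have hb1 : 1 ≤ b := by omega
        rw [hΨrec b k]
        match m, hm with
        | 0, _ => simp
        | 1, hm =>
          apply dvd_add
          · exact Dvd.dvd.mul_right ⟨X^2 - X, by ring⟩ _
          · exact Dvd.dvd.mul_right ⟨X - 1, by ring⟩ _
        | (m+2), hm =>
          apply dvd_add
          · have h1 : (X:ℚ[X])^m ∣ derivative (Ψ b (k-1)) :=
              aux_dvd_deriv (ih hb1 (k-1) (m+1) (by push_cast at hm ⊢; omega))
            obtain ⟨c, hc⟩ := h1
            exact ⟨(X-1) * c, by rw [hc]; ring⟩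
          · have h1 : (X:ℚ[X])^(m+1) ∣ derivative (Ψ b k) :=
              aux_dvd_deriv (ih hb1 k (m+2) (by push_cast at hm ⊢; omega))
            obtain ⟨c, hc⟩ := h1
            exact ⟨(X-1) * c, by rw [hc]; ring⟩
  have hcoeff_zero : ∀ b : ℕ, 1 ≤ b → ∀ k : ℤ, ∀ i : ℕ, (i:ℤ) ≤ k → (Ψ b k).coeff i = 0 := by
    intro b hb k i hi
    have := hdvd b hb k (i+1) (by push_cast; omega)
    rw [X_pow_dvd_iff] at this
    exact this i (by omega)
  -- coefficient of t^(b+1) in Ψ b b is (-1)^b b!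
  have hQ : ∀ b : ℕ, 1 ≤ b → (Ψ b (b:ℤ)).coeff (b+1) = (-1)^b * (Nat.factorial b : ℚ) := by
    intro b hb
    induction b, hb using Nat.le_induction with
    | base =>
      simp only [Nat.cast_one]
      rw [h11]
      simp [Nat.factorial]
    | succ b hb ih =>
      rw [hΨrec b ((b+1:ℕ):ℤ), hΨzero b ((b+1:ℕ):ℤ) (Or.inr (by push_cast; omega)),
        show ((b+1:ℕ):ℤ) - 1 = (b:ℤ) from by push_cast; ring]
      obtain ⟨n, rfl⟩ : ∃ n, b = n + 1 := ⟨b-1, by omega⟩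
      rw [show (n+1+1)+1 = n+3 from by omega, aux_coeff_comb]
      have hz : (Ψ (n+1) ((n+1:ℕ):ℤ)).coeff (n+1) = 0 :=
        hcoeff_zero (n+1) hb _ (n+1) (by push_cast; omega)
      rw [show n+1+1 = n+2 from rfl] at ih
      rw [hz, ih]
      simp only [coeff_zero, mul_zero, zero_mul, sub_zero, add_zero, Nat.factorial_succ]
      push_cast; ring
  -- main induction
  intro b hb
  induction b, hb using Nat.le_induction with
  | base =>
    simp only [Nat.cast_one, show (1:ℤ) - 1 = 0 from by norm_num]
    rw [h10]
    norm_num [Nat.factorial]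
  | succ b hb ih =>
    rw [show ((b+1:ℕ):ℤ) - 1 = (b:ℤ) from by push_cast; ring, hΨrec b (b:ℤ)]
    by_cases hb1 : b = 1
    · subst hb1
      simp only [Nat.cast_one, show (1:ℤ) - 1 = 0 from by norm_num]
      rw [h10, h11]
      have : ((X:ℚ[X])^3 - X^2) * derivative ((X:ℚ[X])^2 - X) + ((X:ℚ[X])^2 - X) * derivative ((X:ℚ[X])^3 - X^2)
          = C 5 * X^4 - C 8 * X^3 + C 3 * X^2 := by
        simp only [derivative_sub, derivative_X_pow, derivative_X, Nat.cast_ofNat]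
        rw [map_ofNat C 5, map_ofNat C 8, map_ofNat C 3, map_ofNat C 2]
        ring
      rw [this]
      norm_num [Nat.factorial]
    · obtain ⟨n, rfl⟩ : ∃ n, b = n + 2 := ⟨b - 2, by omega⟩
      rw [show (n+2)+1 = n+3 from rfl, aux_coeff_comb]
      have hP1 : (Ψ (n+2) (((n+2:ℕ):ℤ) - 1)).coeff (n+1) = 0 :=
        hcoeff_zero (n+2) (by omega) _ (n+1) (by push_cast; omega)
      have hQ1 : (Ψ (n+2) ((n+2:ℕ):ℤ)).coeff (n+2) = 0 :=
        hcoeff_zero (n+2) (by omega) _ (n+2) (by push_cast; omega)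
      have hQ2 : (Ψ (n+2) ((n+2:ℕ):ℤ)).coeff (n+3) = (-1)^(n+2) * (Nat.factorial (n+2) : ℚ) := by
        have := hQ (n+2) (by omega)
        rwa [show (n+2)+1 = n+3 from rfl] at this
      rw [hP1, hQ1, hQ2, ih]
      simp only [Nat.factorial_succ]
      push_cast; ring
end

section
/- Define \Psi_b^1(t) for b ≥ 1 by the recursion \Psi_{b+1}^1(t) = (t^3 - t^2) d/dt \Psi_b^0(t) + (t^2 - t) d/dt \Psi_b^1(t) with \Psi_1^1(t) = t^3 - t^2 (arising from the general recursion with \Psi_0^0(t) = t-1), where \Psi_b^0 satisfies \Psi_{b+1}^0 = (t^2-t)(\Psi_b^0)'. Then the top coefficient of \Psi_b^1(t), i.e. the coefficient of t^{b+2}, equals (b+1)! \sum_{k=2}^{b+1} 1/k. -/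
open Polynomial

private lemma psi_deg0 (Ψ0 : ℕ → Polynomial ℚ)
    (h00 : Ψ0 0 = X - 1)
    (h0rec : ∀ b, Ψ0 (b + 1) = (X ^ 2 - X) * derivative (Ψ0 b)) :
    ∀ b, (Ψ0 b).natDegree ≤ b + 1 := by
  intro b
  induction b with
  | zero => rw [h00]; compute_degree
  | succ n ih =>
      rw [h0rec]
      calc ((X ^ 2 - X : Polynomial ℚ) * derivative (Ψ0 n)).natDegree
          ≤ (X ^ 2 - X : Polynomial ℚ).natDegree + (derivative (Ψ0 n)).natDegree :=
            natDegree_mul_le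
        _ ≤ 2 + ((Ψ0 n).natDegree - 1) := by
            gcongr
            · compute_degree
            · exact natDegree_derivative_le _
        _ ≤ n + 2 := by omega

private lemma psi_lead0 (Ψ0 : ℕ → Polynomial ℚ)
    (h00 : Ψ0 0 = X - 1)
    (h0rec : ∀ b, Ψ0 (b + 1) = (X ^ 2 - X) * derivative (Ψ0 b)) :
    ∀ b, (Ψ0 b).coeff (b + 1) = Nat.factorial b := by
  intro b
  induction b with
  | zero => simp [h00, coeff_X_one, coeff_one, Nat.factorial]
  | succ n ih =>
      rw [h0rec, sub_mul, coeff_sub]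
      have h1 : ((X : Polynomial ℚ) ^ 2 * derivative (Ψ0 n)).coeff (n + 1 + 1) =
          (derivative (Ψ0 n)).coeff n := by
        have := coeff_X_pow_mul (derivative (Ψ0 n)) 2 n
        simpa [show n + 2 = n + 1 + 1 by ring] using this
      have h2 : ((X : Polynomial ℚ) * derivative (Ψ0 n)).coeff (n + 1 + 1) =
          (derivative (Ψ0 n)).coeff (n + 1) := coeff_X_mul (derivative (Ψ0 n)) (n + 1)
      have z1 : (Ψ0 n).coeff (n + 1 + 1) = 0 :=
        coeff_eq_zero_of_natDegree_lt (by have := psi_deg0 Ψ0 h00 h0rec n; omega)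
      rw [h1, h2, coeff_derivative, coeff_derivative, ih, z1]
      push_cast [Nat.factorial_succ]
      ring

private lemma psi_deg1 (Ψ0 Ψ1 : ℕ → Polynomial ℚ)
    (h00 : Ψ0 0 = X - 1)
    (h0rec : ∀ b, Ψ0 (b + 1) = (X ^ 2 - X) * derivative (Ψ0 b))
    (h11 : Ψ1 1 = X ^ 3 - X ^ 2)
    (h1rec : ∀ b, 1 ≤ b → Ψ1 (b + 1) =
      (X ^ 3 - X ^ 2) * derivative (Ψ0 b) + (X ^ 2 - X) * derivative (Ψ1 b)) :
    ∀ b, 1 ≤ b → (Ψ1 b).natDegree ≤ b + 2 := by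
  intro b hb
  induction b with
  | zero => omega
  | succ n ih =>
      rcases Nat.eq_or_lt_of_le hb with h | h
      · have hn0 : n = 0 := by omega
        subst hn0
        rw [h11]
        compute_degree
      · have hn : 1 ≤ n := by omega
        rw [h1rec n hn]
        have hA : ((X ^ 3 - X ^ 2 : Polynomial ℚ) * derivative (Ψ0 n)).natDegree ≤ n + 3 := by
          calc ((X ^ 3 - X ^ 2 : Polynomial ℚ) * derivative (Ψ0 n)).natDegree
              ≤ (X ^ 3 - X ^ 2 : Polynomial ℚ).natDegree + (derivative (Ψ0 n)).natDegree :=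
                natDegree_mul_le
            _ ≤ 3 + ((Ψ0 n).natDegree - 1) := by
                gcongr
                · compute_degree
                · exact natDegree_derivative_le _
            _ ≤ n + 3 := by have := psi_deg0 Ψ0 h00 h0rec n; omega
        have hB : ((X ^ 2 - X : Polynomial ℚ) * derivative (Ψ1 n)).natDegree ≤ n + 3 := by
          calc ((X ^ 2 - X : Polynomial ℚ) * derivative (Ψ1 n)).natDegree
              ≤ (X ^ 2 - X : Polynomial ℚ).natDegree + (derivative (Ψ1 n)).natDegree :=
                natDegree_mul_le
            _ ≤ 2 + ((Ψ1 n).natDegree - 1) := by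
                gcongr
                · compute_degree
                · exact natDegree_derivative_le _
            _ ≤ n + 3 := by have := ih hn; omega
        exact le_trans (natDegree_add_le _ _) (by omega)

/-- Let `Ψ_b^0` satisfy `Ψ_0^0 = t-1`, `Ψ_{b+1}^0 = (t²-t)(Ψ_b^0)'`,
and let `Ψ_b^1` (for `b ≥ 1`) satisfy `Ψ_1^1 = t³-t²` and
`Ψ_{b+1}^1 = (t³-t²)(Ψ_b^0)' + (t²-t)(Ψ_b^1)'`.  Then for `b ≥ 1` the top coefficient
of `Ψ_b^1` (coefficient of `t^{b+2}`) equals `(b+1)! ∑_{k=2}^{b+1} 1/k`. -/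
theorem psi1_top_coeff (Ψ0 Ψ1 : ℕ → Polynomial ℚ)
    (h00 : Ψ0 0 = X - 1)
    (h0rec : ∀ b, Ψ0 (b + 1) = (X ^ 2 - X) * derivative (Ψ0 b))
    (h11 : Ψ1 1 = X ^ 3 - X ^ 2)
    (h1rec : ∀ b, 1 ≤ b → Ψ1 (b + 1) =
      (X ^ 3 - X ^ 2) * derivative (Ψ0 b) + (X ^ 2 - X) * derivative (Ψ1 b)) :
    ∀ b, 1 ≤ b → (Ψ1 b).coeff (b + 2) =
      (Nat.factorial (b + 1) : ℚ) * ∑ k ∈ Finset.Icc 2 (b + 1), (1 : ℚ) / (k : ℚ) := by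
  intro b hb
  induction b, hb using Nat.le_induction with
  | base =>
      rw [h11]
      norm_num [coeff_sub, coeff_X_pow, Finset.Icc_self, Nat.factorial]
  | succ n hn ih =>
      rw [h1rec n hn, coeff_add, sub_mul, sub_mul, coeff_sub, coeff_sub]
      have e1 : ((X : Polynomial ℚ) ^ 3 * derivative (Ψ0 n)).coeff (n + 1 + 2) =
          (derivative (Ψ0 n)).coeff n := by
        have := coeff_X_pow_mul (derivative (Ψ0 n)) 3 n
        simpa [show n + 3 = n + 1 + 2 by ring] using this
      have e2 : ((X : Polynomial ℚ) ^ 2 * derivative (Ψ0 n)).coeff (n + 1 + 2) =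
          (derivative (Ψ0 n)).coeff (n + 1) := by
        have := coeff_X_pow_mul (derivative (Ψ0 n)) 2 (n + 1)
        simpa [show n + 1 + 2 = n + 3 by ring] using this
      have e3 : ((X : Polynomial ℚ) ^ 2 * derivative (Ψ1 n)).coeff (n + 1 + 2) =
          (derivative (Ψ1 n)).coeff (n + 1) := by
        have := coeff_X_pow_mul (derivative (Ψ1 n)) 2 (n + 1)
        simpa [show n + 1 + 2 = n + 3 by ring] using this
      have e4 : ((X : Polynomial ℚ) * derivative (Ψ1 n)).coeff (n + 1 + 2) =
          (derivative (Ψ1 n)).coeff (n + 2) := coeff_X_mul (derivative (Ψ1 n)) (n + 2)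
      have z1 : (Ψ0 n).coeff (n + 1 + 1) = 0 :=
        coeff_eq_zero_of_natDegree_lt (by have := psi_deg0 Ψ0 h00 h0rec n; omega)
      have z2 : (Ψ1 n).coeff (n + 2 + 1) = 0 :=
        coeff_eq_zero_of_natDegree_lt
          (by have := psi_deg1 Ψ0 Ψ1 h00 h0rec h11 h1rec n hn; omega)
      rw [e1, e2, e3, e4, coeff_derivative, coeff_derivative, coeff_derivative,
        coeff_derivative, z1, z2, psi_lead0 Ψ0 h00 h0rec n, ih]
      rw [Finset.sum_Icc_succ_top (by omega : 2 ≤ n + 1 + 1)]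
      have hf : (Nat.factorial (n + 2) : ℚ) = (n + 2) * Nat.factorial (n + 1) := by
        push_cast [Nat.factorial_succ]; ring
      have hf2 : (Nat.factorial (n + 1) : ℚ) = (n + 1) * Nat.factorial n := by
        push_cast [Nat.factorial_succ]; ring
      have hne : ((n : ℚ) + 2) ≠ 0 := by positivity
      rw [hf, hf2]
      push_cast
      field_simp
      ring
end

section
/- For formal power series in x: if y = y(x) is the formal power series solution of y(1-y)^\tau = x with y(0) = 0 (where \tau is a formal parameter), then y = \sum_{k ≥ 1} (\prod_{a=0}^{k-2} (k\tau + a) / k!) x^k. -/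
open PowerSeries

/-- `(1+u)^τ := ∑_n binom(τ,n) u^n`, the formal binomial power, well defined for any
power series `u` with zero constant term. -/
noncomputable def binomPow {K : Type*} [Field K] (τ : K) (u : PowerSeries K) :
    PowerSeries K :=
  PowerSeries.mk fun m => ∑ n ∈ Finset.range (m + 1),
    ((∏ a ∈ Finset.range n, (τ - (a : K))) / (Nat.factorial n : K)) *
      PowerSeries.coeff m (u ^ n)

/-! Write `y = X * u`. The equation says `u = φ(y)` with `φ(t) = (1 - t)^(-τ)`, so by Lagrange
inversion `(k + 1) [X^(k+1)] y = [t^k] φ(t)^(k+1) = (-1)^k binom(-(k+1)τ, k)`, which is the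
claimed coefficient times `k + 1`.

Lagrange inversion is a residue computation: expanding `u^(k+1) = φ(y)^(k+1)` in powers of `y`,
`(k + 1) [X^(k+1)] y = [X^k] (u^(k+1) u^-(k+1) y') = ∑_j [t^j] φ^(k+1) · res (y^(j-k-1) y')`,
and only `j = k` contributes because `y^(j-k-1) y'` is a derivative for `j ≠ k`. -/

open Finset

theorem Ring.choose_eq_prod_range_sub_div_factorial {K : Type*} [Field K] [CharZero K]
    (a : K) (n : ℕ) : Ring.choose a n = (∏ j ∈ range n, (a - j)) / n.factorial := by
  rw [Ring.choose_eq_smul, ← descPochhammer_eval_eq_prod_range, ← Polynomial.aeval_eq_smeval,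
    Polynomial.aeval_def, ← Polynomial.eval_map, descPochhammer_map, smul_eq_mul, div_eq_inv_mul]

theorem Ring.neg_one_pow_mul_choose_neg {K : Type*} [Field K] [CharZero K] (x : K) (m : ℕ) :
    (-1) ^ m * Ring.choose (-x) m = (∏ a ∈ range m, (x + a)) / m.factorial := by
  have hneg : ∏ a ∈ range m, (-x - a) = (-1) ^ m * ∏ a ∈ range m, (x + a) := by
    simp only [← neg_add', prod_neg, card_range]
  rw [Ring.choose_eq_prod_range_sub_div_factorial, hneg, mul_div_assoc', ← mul_assoc, ← mul_pow]
  simp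

namespace PowerSeries

theorem binomialSeries_pow {R A : Type*} [CommRing R] [BinomialRing R] [Ring A] [Algebra R A]
    (r : R) (n : ℕ) : binomialSeries A r ^ n = binomialSeries A (n • r) := by
  induction n with
  | zero => simp
  | succ n ih => rw [pow_succ, ih, ← binomialSeries_add, succ_nsmul]

section CommRing

variable {R : Type*} [CommRing R] {y : R⟦X⟧}

theorem coeff_pow_of_constantCoeff_eq_zero (hy : constantCoeff y = 0) {m d : ℕ} (h : m < d) :
    coeff m (y ^ d) = 0 :=
  X_pow_dvd_iff.mp (pow_dvd_pow_of_dvd (X_dvd_iff.mpr hy) d) m h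

theorem coeff_subst_eq_sum_range (hy : constantCoeff y = 0) (f : R⟦X⟧) {m N : ℕ} (hmN : m < N) :
    coeff m (f.subst y) = ∑ d ∈ range N, coeff d f * coeff m (y ^ d) := by
  rw [coeff_subst' (HasSubst.of_constantCoeff_zero' hy)]
  refine finsum_eq_sum_of_support_subset _ fun d hd => ?_
  rw [coe_range, Set.mem_Iio]
  by_contra! h
  exact hd (by simp only [coeff_pow_of_constantCoeff_eq_zero hy (hmN.trans_le h), smul_zero])

theorem constantCoeff_subst_of_constantCoeff_eq_zero (hy : constantCoeff y = 0) (f : R⟦X⟧) :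
    constantCoeff (f.subst y) = constantCoeff f := by
  rw [← coeff_zero_eq_constantCoeff_apply, ← coeff_zero_eq_constantCoeff_apply,
    coeff_subst_eq_sum_range hy f zero_lt_one]
  simp

theorem X_pow_dvd_subst_sub_sum (hy : constantCoeff y = 0) (f : R⟦X⟧) (n : ℕ) :
    X ^ n ∣ f.subst y - ∑ j ∈ range n, C (coeff j f) * y ^ j := by
  refine X_pow_dvd_iff.mpr fun m hm => ?_
  simp only [map_sub, map_sum, coeff_C_mul, coeff_subst_eq_sum_range hy f hm, sub_self]

theorem coeff_natCast_mul_sub_X_mul_derivative (g : R⟦X⟧) (n : ℕ) :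
    coeff n ((n : R⟦X⟧) * g - X * d⁄dX R g) = 0 := by
  cases n with
  | zero => simp
  | succ n =>
    rw [map_sub, ← map_natCast C, coeff_C_mul, coeff_succ_X_mul, coeff_derivative]
    push_cast
    ring

end CommRing

variable {K : Type*} [Field K] [CharZero K]

theorem coeff_inv_pow_succ_mul_derivative_X_mul {u : K⟦X⟧} (hu : constantCoeff u ≠ 0) (m : ℕ) :
    coeff m (u⁻¹ ^ (m + 1) * d⁄dX K (X * u)) = if m = 0 then 1 else 0 := by
  have hdy : d⁄dX K (X * u) = u + X * d⁄dX K u := by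
    rw [Derivation.leibniz, derivative_X, smul_eq_mul, smul_eq_mul, mul_one, add_comm, mul_comm]
  cases m with
  | zero => simp [hdy, hu]
  | succ m =>
    -- In Laurent series, `u⁻¹ ^ (m + 2) * (X * u)' = -(X ^ (m + 2) / (m + 1)) * ((X * u) ^ -(m + 1))'`,
    -- and a derivative has no `X⁻¹` term.
    have hkey : ((m + 1 : ℕ) : K⟦X⟧) * (u⁻¹ ^ (m + 2) * d⁄dX K (X * u)) =
        ((m + 1 : ℕ) : K⟦X⟧) * u⁻¹ ^ (m + 1) - X * d⁄dX K (u⁻¹ ^ (m + 1)) := by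
      have hinv : u⁻¹ ^ (m + 2) * u = u⁻¹ ^ (m + 1) := by
        rw [pow_succ, mul_assoc, PowerSeries.inv_mul_cancel u hu, mul_one]
      rw [Derivation.leibniz_pow, derivative_inv', hdy, mul_add, hinv]
      simp only [Nat.add_sub_cancel, smul_eq_mul, nsmul_eq_mul]
      ring
    have h := coeff_natCast_mul_sub_X_mul_derivative (u⁻¹ ^ (m + 1)) (m + 1)
    rw [← hkey, ← map_natCast C, coeff_C_mul] at h
    simpa [Nat.cast_add_one_ne_zero] using h

theorem coeff_pow_mul_inv_pow_mul_derivative_X_mul {u : K⟦X⟧} (hu : constantCoeff u ≠ 0)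
    {j m : ℕ} (hjm : j ≤ m) :
    coeff m ((X * u) ^ j * (u⁻¹ ^ (m + 1) * d⁄dX K (X * u))) = if j = m then 1 else 0 := by
  obtain ⟨i, rfl⟩ := Nat.exists_eq_add_of_le hjm
  have hcancel : u ^ j * u⁻¹ ^ (j + i + 1) = u⁻¹ ^ (i + 1) := by
    rw [show j + i + 1 = j + (i + 1) by ring, pow_add, ← mul_assoc, ← mul_pow,
      PowerSeries.mul_inv_cancel u hu, one_pow, one_mul]
  rw [mul_pow, mul_assoc, ← mul_assoc (u ^ j), hcancel, coeff_X_pow_mul', if_pos hjm,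
    Nat.add_sub_cancel_left, coeff_inv_pow_succ_mul_derivative_X_mul hu]
  simp

theorem lagrange_inversion {φ y : K⟦X⟧} (hφ : constantCoeff φ ≠ 0) (hy : y = X * φ.subst y)
    (m : ℕ) : (m + 1) * coeff (m + 1) y = coeff m (φ ^ (m + 1)) := by
  have hy0 : constantCoeff y = 0 := by rw [hy]; simp
  have hu : constantCoeff (φ.subst y) ≠ 0 := by
    rwa [constantCoeff_subst_of_constantCoeff_eq_zero hy0]
  obtain ⟨E, hE⟩ := X_pow_dvd_subst_sub_sum hy0 (φ ^ (m + 1)) (m + 1)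
  rw [subst_pow (HasSubst.of_constantCoeff_zero' hy0), sub_eq_iff_eq_add'] at hE
  generalize φ.subst y = u at hy hu hE
  subst hy
  calc (m + 1) * coeff (m + 1) (X * u)
      = coeff m (d⁄dX K (X * u)) := by rw [coeff_derivative, mul_comm]
    _ = coeff m (u ^ (m + 1) * (u⁻¹ ^ (m + 1) * d⁄dX K (X * u))) := by
        rw [← mul_assoc, ← mul_pow, PowerSeries.mul_inv_cancel u hu, one_pow, one_mul]
    _ = ∑ j ∈ range (m + 1),
          coeff j (φ ^ (m + 1)) * coeff m ((X * u) ^ j * (u⁻¹ ^ (m + 1) * d⁄dX K (X * u))) := by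
        rw [hE, add_mul, map_add, mul_assoc, coeff_X_pow_mul', if_neg (by omega), add_zero,
          sum_mul, map_sum]
        simp only [mul_assoc, coeff_C_mul]
    _ = coeff m (φ ^ (m + 1)) := by
        rw [sum_congr rfl fun j hj =>
          by rw [coeff_pow_mul_inv_pow_mul_derivative_X_mul hu (mem_range_succ_iff.mp hj)]]
        simp

end PowerSeries

variable {K : Type*} [Field K] [CharZero K]

theorem binomPow_eq_subst {u : K⟦X⟧} (hu : constantCoeff u = 0) (σ : K) :
    binomPow σ u = (binomialSeries K σ).subst u := by
  ext m
  simp [binomPow, coeff_subst_eq_sum_range hu _ m.lt_succ_self,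
    Ring.choose_eq_prod_range_sub_div_factorial]

theorem binomPow_neg_eq_subst {y : K⟦X⟧} (hy : constantCoeff y = 0) (σ : K) :
    binomPow σ (-y) = (rescale (-1) (binomialSeries K σ)).subst y := by
  have hy' : HasSubst y := HasSubst.of_constantCoeff_zero' hy
  rw [binomPow_eq_subst (by simp [hy]), rescale_eq_subst,
    subst_comp_subst_apply (HasSubst.smul_X' _) hy', subst_smul hy', subst_X hy', neg_one_smul]

/-- **Lagrange inversion for the framed Lambert curve.**
If `y` is a formal power series with `y(0) = 0` satisfying `y(1-y)^τ = x`
(with `τ = RatFunc.X` a formal parameter), then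
`y = ∑_{k ≥ 1} (∏_{a=0}^{k-2} (kτ + a)/k!) x^k`. -/
theorem lambert_series (y : PowerSeries (RatFunc ℚ))
    (h0 : PowerSeries.constantCoeff y = 0)
    (heq : y * binomPow (RatFunc.X) (-y) = PowerSeries.X) :
    y = PowerSeries.mk fun k =>
      if k = 0 then 0 else
        (∏ a ∈ Finset.range (k - 1), ((k : RatFunc ℚ) * RatFunc.X + (a : RatFunc ℚ))) /
          (Nat.factorial k : RatFunc ℚ) := by
  set φ := rescale (-1) (binomialSeries (RatFunc ℚ) (-RatFunc.X : RatFunc ℚ))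
  set ψ := rescale (-1) (binomialSeries (RatFunc ℚ) (RatFunc.X : RatFunc ℚ))
  have hy' : HasSubst y := HasSubst.of_constantCoeff_zero' h0
  have hφψ : (φ * ψ).subst y = 1 := by
    rw [← map_mul, ← binomialSeries_add, neg_add_cancel, binomialSeries_zero, map_one,
      ← coe_substAlgHom hy', map_one]
  have hy : y = X * φ.subst y := by
    rw [← heq, binomPow_neg_eq_subst h0, mul_assoc, ← subst_mul hy', mul_comm ψ, hφψ, mul_one]
  have hφ : constantCoeff φ ≠ 0 := by
    rw [← coeff_zero_eq_constantCoeff_apply]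
    simp [φ]
  ext (_ | m)
  · simp [h0]
  have h := lagrange_inversion hφ hy m
  rw [← map_pow, binomialSeries_pow, coeff_rescale, binomialSeries_coeff, smul_eq_mul, mul_one,
    nsmul_eq_mul, mul_neg, Ring.neg_one_pow_mul_choose_neg,
    eq_div_iff (Nat.cast_ne_zero.mpr m.factorial_ne_zero)] at h
  rw [coeff_mk, if_neg m.succ_ne_zero, Nat.add_sub_cancel,
    eq_div_iff (Nat.cast_ne_zero.mpr (m + 1).factorial_ne_zero), ← h, Nat.factorial_succ]
  push_cast
  ring
end

section
/- Suppose a family of symmetric numbers \langle \tau_{b_1}\cdots\tau_{b_l} \rangle (indexed by l ≥ 1 and nonnegative integers b_1,...,b_l with \sum b_i = 2g-3+l for a fixed g ≥ 1) satisfies the recursion \langle \tau_{b_L} \rangle = (1/(l-1)) \sum_{1 ≤ i < j ≤ l} \langle \tau_{b_i+b_j-1} \tau_{b_{L∖\{i,j\}}} \rangle · (b_i+b_j)!/(b_i! b_j!) for all l ≥ 2, with one-point initial value \langle \tau_{2g-2} \rangle = c. Then \langle \tau_{b_1}\cdots\tau_{b_l} \rangle = \binom{2g-3+l}{b_1,...,b_l}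 c, the multinomial coefficient times c, for all l and all valid (b_1,...,b_l). -/
open Finset

private lemma perm_getD_cons_eraseIdx :
    ∀ (l : List ℕ) (i : ℕ), i < l.length → l.Perm (l.getD i 0 :: l.eraseIdx i) := by
  intro l
  induction l with
  | nil => intro i h; simp at h
  | cons a t ih =>
    intro i h
    cases i with
    | zero => simp
    | succ i =>
      simp only [List.getD_cons_succ, List.eraseIdx_cons_succ]
      have := ih i (by simpa using Nat.lt_of_succ_lt_succ h)
      exact (this.cons a).trans (List.Perm.swap _ _ _)

private lemma getD_eraseIdx_of_lt :
    ∀ (l : List ℕ) (i j : ℕ), i < j → (l.eraseIdx j).getD i 0 = l.getD i 0 := by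
  intro l
  induction l with
  | nil => intro i j _; simp
  | cons a t ih =>
    intro i j hij
    cases j with
    | zero => omega
    | succ j =>
      cases i with
      | zero => simp
      | succ i =>
        simp only [List.eraseIdx_cons_succ, List.getD_cons_succ]
        exact ih i j (by omega)

private lemma perm_double_erase (l : List ℕ) (i j : ℕ) (hij : i < j) (hj : j < l.length) :
    l.Perm (l.getD i 0 :: l.getD j 0 :: (l.eraseIdx j).eraseIdx i) := by
  have h1 : l.Perm (l.getD j 0 :: l.eraseIdx j) := perm_getD_cons_eraseIdx l j hj
  have hlen : (l.eraseIdx j).length = l.length - 1 := List.length_eraseIdx_of_lt hj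
  have hi' : i < (l.eraseIdx j).length := by omega
  have h2 : (l.eraseIdx j).Perm ((l.eraseIdx j).getD i 0 :: (l.eraseIdx j).eraseIdx i) :=
    perm_getD_cons_eraseIdx _ i hi'
  rw [getD_eraseIdx_of_lt l i j hij] at h2
  exact (h1.trans (h2.cons _)).trans (List.Perm.swap _ _ _)

private lemma sum_getD (l : List ℕ) : ∑ i ∈ Finset.range l.length, l.getD i 0 = l.sum := by
  induction l with
  | nil => simp
  | cons a t ih =>
    rw [List.length_cons, Finset.sum_range_succ']
    simp only [List.getD_cons_succ, List.getD_cons_zero, List.sum_cons]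
    rw [ih]; omega

private lemma pair_sum (n : ℕ) (f : ℕ → ℚ) :
    ∑ i ∈ Finset.range n, ∑ j ∈ Finset.Ioo i n, (f i + f j)
      = ((n : ℚ) - 1) * ∑ i ∈ Finset.range n, f i := by
  have hsplit : ∀ i, ∑ j ∈ Finset.Ioo i n, (f i + f j)
      = (Finset.Ioo i n).card • f i + ∑ j ∈ Finset.Ioo i n, f j := by
    intro i; rw [Finset.sum_add_distrib, Finset.sum_const]
  simp_rw [hsplit]
  rw [Finset.sum_add_distrib]
  have hswap : ∑ i ∈ Finset.range n, ∑ j ∈ Finset.Ioo i n, f j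
      = ∑ j ∈ Finset.range n, ∑ i ∈ Finset.range j, f j := by
    refine Finset.sum_comm' ?_
    intro i j
    simp only [Finset.mem_range, Finset.mem_Ioo]
    omega
  rw [hswap]
  have h1 : ∀ i ∈ Finset.range n, (Finset.Ioo i n).card • f i = ((n : ℚ) - 1 - i) * f i := by
    intro i hi
    rw [Finset.mem_range] at hi
    rw [Nat.card_Ioo, nsmul_eq_mul]
    have : ((n - i - 1 : ℕ) : ℚ) = (n : ℚ) - 1 - i := by
      rw [Nat.sub_sub, Nat.cast_sub (by omega)]
      push_cast; ring
    rw [this]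
  have h2 : ∀ j ∈ Finset.range n, ∑ i ∈ Finset.range j, f j = (j : ℚ) * f j := by
    intro j _; rw [Finset.sum_const, Finset.card_range, nsmul_eq_mul]
  rw [Finset.sum_congr rfl h1, Finset.sum_congr rfl h2, ← Finset.sum_add_distrib,
    Finset.mul_sum]
  refine Finset.sum_congr rfl ?_
  intro i _
  ring

/-- Suppose `A` is a permutation-invariant family of rational numbers
indexed by tuples (lists) of nonnegative integers, defined whenever `∑ b_i = 2g-3+l`
(`g ≥ 1` fixed, `l` the length), satisfying the cut-and-join type recursion
`A(b_L) = (1/(l-1)) ∑_{i<j} A(b_i+b_j-1, b_{L∖{i,j}}) (b_i+b_j)!/(b_i! b_j!)`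
for `l ≥ 2` (terms with `b_i + b_j = 0` omitted), with one-point value `A(2g-2) = c`.
Then `A(b_1,…,b_l) = (2g-3+l choose b_1,…,b_l)·c = (∑b_i)!/(b_1!⋯b_l!)·c`. -/
theorem lambda_g_recursion_solution (g : ℕ) (hg : 1 ≤ g) (c : ℚ)
    (A : List ℕ → ℚ)
    (hsym : ∀ l₁ l₂ : List ℕ, l₁.Perm l₂ → A l₁ = A l₂)
    (hinit : A [2 * g - 2] = c)
    (hrec : ∀ l : List ℕ, 2 ≤ l.length →
      (l.sum : ℤ) = 2 * (g : ℤ) - 3 + l.length →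
      A l = (1 / ((l.length : ℚ) - 1)) *
        ∑ i ∈ Finset.range l.length, ∑ j ∈ Finset.Ioo i l.length,
          if l.getD i 0 + l.getD j 0 = 0 then 0 else
            A ((l.getD i 0 + l.getD j 0 - 1) :: ((l.eraseIdx j).eraseIdx i)) *
              (Nat.factorial (l.getD i 0 + l.getD j 0) : ℚ) /
                ((Nat.factorial (l.getD i 0) : ℚ) * (Nat.factorial (l.getD j 0) : ℚ))) :
    ∀ l : List ℕ, l ≠ [] → (l.sum : ℤ) = 2 * (g : ℤ) - 3 + l.length →
      A l = (Nat.factorial l.sum : ℚ) / ((l.map Nat.factorial).prod : ℚ) * c := by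
  suffices H : ∀ n : ℕ, ∀ l : List ℕ, l.length = n → l ≠ [] →
      (l.sum : ℤ) = 2 * (g : ℤ) - 3 + l.length →
      A l = (Nat.factorial l.sum : ℚ) / ((l.map Nat.factorial).prod : ℚ) * c by
    intro l hne hsum
    exact H l.length l rfl hne hsum
  intro n
  induction n with
  | zero => intro l hlen hne _; exact absurd (List.length_eq_zero_iff.mp hlen) hne
  | succ n ih =>
    intro l hlen hne hsum
    rcases Nat.eq_zero_or_pos n with hn0 | hn1
    · -- base case: length 1
      subst hn0
      obtain ⟨b, rfl⟩ : ∃ b, l = [b] := by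
        cases l with
        | nil => simp at hlen
        | cons a t =>
          cases t with
          | nil => exact ⟨a, rfl⟩
          | cons x y => simp at hlen
      have hb : b = 2 * g - 2 := by
        simp only [List.sum_cons, List.sum_nil, List.length_cons, List.length_nil] at hsum
        omega
      subst hb
      rw [hinit]
      have hfac : (Nat.factorial (2 * g - 2) : ℚ) ≠ 0 := by
        exact_mod_cast (Nat.factorial_pos _).ne'
      simp only [List.sum_cons, List.sum_nil, Nat.add_zero, List.map_cons, List.map_nil,
        List.prod_cons, List.prod_nil, mul_one]
      field_simp
    · -- inductive step: length n+1 ≥ 2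
      set S := l.sum with hS
      have hlen2 : 2 ≤ l.length := by omega
      have hSpos : 1 ≤ S := by
        have : (S : ℤ) = 2 * (g : ℤ) - 3 + l.length := hsum
        omega
      set P : ℚ := ((l.map Nat.factorial).prod : ℚ) with hP
      have hPpos : 0 < P := by
        rw [hP]
        exact_mod_cast List.prod_pos (by
          intro x hx
          simp only [List.mem_map] at hx
          obtain ⟨y, _, rfl⟩ := hx
          exact Nat.factorial_pos y)
      set C : ℚ := (Nat.factorial (S - 1) : ℚ) / P * c with hC
      rw [hrec l hlen2 hsum]
      have key : ∀ i ∈ Finset.range l.length, ∀ j ∈ Finset.Ioo i l.length,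
          (if l.getD i 0 + l.getD j 0 = 0 then 0 else
            A ((l.getD i 0 + l.getD j 0 - 1) :: ((l.eraseIdx j).eraseIdx i)) *
              (Nat.factorial (l.getD i 0 + l.getD j 0) : ℚ) /
                ((Nat.factorial (l.getD i 0) : ℚ) * (Nat.factorial (l.getD j 0) : ℚ)))
          = (((l.getD i 0 : ℚ)) + (l.getD j 0 : ℚ)) * C := by
        intro i hi j hj
        rw [Finset.mem_range] at hi
        rw [Finset.mem_Ioo] at hj
        obtain ⟨hij, hjlen⟩ := hj
        set bi := l.getD i 0 with hbi
        set bj := l.getD j 0 with hbj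
        set rest := (l.eraseIdx j).eraseIdx i with hrest
        have hperm : l.Perm (bi :: bj :: rest) := perm_double_erase l i j hij hjlen
        have hsum' : S = bi + bj + rest.sum := by
          have := hperm.sum_eq
          simp only [List.sum_cons] at this
          omega
        have hprod : P = (Nat.factorial bi : ℚ) * ((Nat.factorial bj : ℚ) *
            ((rest.map Nat.factorial).prod : ℚ)) := by
          have := (hperm.map Nat.factorial).prod_eq
          simp only [List.map_cons, List.prod_cons] at this
          rw [hP, this]
          push_cast
          ring
        have hlenrest : rest.length + 2 = l.length := by
          have := hperm.length_eq
          simp only [List.length_cons] at this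
          omega
        by_cases h0 : bi + bj = 0
        · rw [if_pos h0]
          have : bi = 0 ∧ bj = 0 := by omega
          rw [this.1, this.2]
          norm_num
        · rw [if_neg h0]
          set L' := (bi + bj - 1) :: rest with hL'
          have hL'len : L'.length = n := by
            simp only [hL', List.length_cons]
            omega
          have hL'sum : L'.sum = S - 1 := by
            simp only [hL', List.sum_cons]
            omega
          have hA : A L' = (Nat.factorial L'.sum : ℚ) / ((L'.map Nat.factorial).prod : ℚ) * c := by
            refine ih L' hL'len (by simp [hL']) ?_
            rw [hL'sum, hL'len]
            have h1 : (S : ℤ) = 2 * (g : ℤ) - 3 + l.length := hsum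
            have h2 : l.length = n + 1 := hlen
            push_cast [Nat.cast_sub hSpos]
            omega
          rw [hA, hL'sum]
          simp only [hL', List.map_cons, List.prod_cons]
          set RP : ℚ := ((rest.map Nat.factorial).prod : ℚ) with hRP
          have hRPpos : 0 < RP := by
            rw [hRP]
            exact_mod_cast List.prod_pos (by
              intro x hx
              simp only [List.mem_map] at hx
              obtain ⟨y, _, rfl⟩ := hx
              exact Nat.factorial_pos y)
          have hfacS : (0:ℚ) < (Nat.factorial (S-1) : ℚ) := by
            exact_mod_cast Nat.factorial_pos _
          have hfaci : (0:ℚ) < (Nat.factorial bi : ℚ) := by exact_mod_cast Nat.factorial_pos _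
          have hfacj : (0:ℚ) < (Nat.factorial bj : ℚ) := by exact_mod_cast Nat.factorial_pos _
          have hfacij : (0:ℚ) < (Nat.factorial (bi + bj - 1) : ℚ) := by
            exact_mod_cast Nat.factorial_pos _
          have hmf : (Nat.factorial (bi + bj) : ℚ)
              = ((bi : ℚ) + bj) * (Nat.factorial (bi + bj - 1) : ℚ) := by
            have := Nat.mul_factorial_pred (n := bi + bj) (by omega)
            calc (Nat.factorial (bi + bj) : ℚ)
                = (((bi + bj) * Nat.factorial (bi + bj - 1) : ℕ) : ℚ) := by rw [this]
              _ = ((bi : ℚ) + bj) * (Nat.factorial (bi + bj - 1) : ℚ) := by push_cast; ring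
          rw [hmf, hC, hprod, Nat.cast_mul, ← hRP]
          field_simp
      rw [Finset.sum_congr rfl (fun i hi => Finset.sum_congr rfl (key i hi))]
      have hps : ∑ i ∈ Finset.range l.length, ∑ j ∈ Finset.Ioo i l.length,
          (((l.getD i 0 : ℚ)) + (l.getD j 0 : ℚ)) * C
          = (((l.length : ℚ) - 1) * (S : ℚ)) * C := by
        simp_rw [← Finset.sum_mul]
        congr 1
        have := pair_sum l.length (fun i => (l.getD i 0 : ℚ))
        rw [this]
        congr 1
        have : ∑ i ∈ Finset.range l.length, ((l.getD i 0 : ℚ)) =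
            ((∑ i ∈ Finset.range l.length, l.getD i 0 : ℕ) : ℚ) := by push_cast; rfl
        rw [this, sum_getD]
      rw [hps]
      have hlq : ((l.length : ℚ) - 1) ≠ 0 :=
        sub_ne_zero.mpr (by exact_mod_cast (by omega : l.length ≠ 1))
      have hmfS : (Nat.factorial S : ℚ) = (S : ℚ) * (Nat.factorial (S - 1) : ℚ) := by
        have := Nat.mul_factorial_pred (n := S) (by omega)
        calc (Nat.factorial S : ℚ) = ((S * Nat.factorial (S - 1) : ℕ) : ℚ) := by rw [this]
          _ = (S : ℚ) * (Nat.factorial (S - 1) : ℚ) := by push_cast; ring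
      rw [hC, hmfS]
      field_simp
end

section
/- The multinomial coefficients satisfy the identity: for l ≥ 2 and nonnegative integers b_1,...,b_l with \sum_i b_i = n+l-1 (any fixed n ≥ 0), \binom{n+l-1}{b_1,...,b_l} = (1/(l-1)) \sum_{1 ≤ i < j ≤ l} \binom{n+l-2}{b_i+b_j-1, b_1,...,\hat{b_i},...,\hat{b_j},...,b_l} · (b_i+b_j)!/(b_i! b_j!), where hats denote omission. -/
open Finset

lemma pair_sum_s18 (l : ℕ) (b : Fin l → ℕ) :
    ∑ p ∈ Finset.univ.filter (fun p : Fin l × Fin l => p.1 < p.2), ((b p.1 : ℚ) + b p.2)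
      = ((l : ℚ) - 1) * ∑ k, (b k : ℚ) := by
  have hswap : ∑ p ∈ Finset.univ.filter (fun p : Fin l × Fin l => p.2 < p.1), ((b p.1 : ℚ) + b p.2)
      = ∑ p ∈ Finset.univ.filter (fun p : Fin l × Fin l => p.1 < p.2), ((b p.1 : ℚ) + b p.2) := by
    apply Finset.sum_equiv (Equiv.prodComm (Fin l) (Fin l)) <;> simp [add_comm]
  have htot : ∑ p : Fin l × Fin l, ((b p.1 : ℚ) + b p.2) = 2 * l * ∑ k, (b k : ℚ) := by
    rw [Fintype.sum_prod_type]
    simp [Finset.sum_add_distrib, Finset.mul_sum]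
    rw [← Finset.sum_add_distrib]
    apply Finset.sum_congr rfl; intros; ring
  have hdiag : ∑ p ∈ Finset.univ.filter (fun p : Fin l × Fin l => p.1 = p.2), ((b p.1 : ℚ) + b p.2)
      = 2 * ∑ k, (b k : ℚ) := by
    rw [Finset.sum_filter, Fintype.sum_prod_type]
    simp [Finset.mul_sum, two_mul, Finset.sum_add_distrib]
  have h1 := Finset.sum_filter_add_sum_filter_not Finset.univ (fun p : Fin l × Fin l => p.1 < p.2)
    (fun p => ((b p.1 : ℚ) + b p.2))
  have h2 := Finset.sum_filter_add_sum_filter_not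
    (Finset.univ.filter (fun p : Fin l × Fin l => ¬ p.1 < p.2))
    (fun p : Fin l × Fin l => p.2 < p.1) (fun p => ((b p.1 : ℚ) + b p.2))
  rw [Finset.filter_filter, Finset.filter_filter] at h2
  have e1 : (Finset.univ.filter fun p : Fin l × Fin l => ¬ p.1 < p.2 ∧ p.2 < p.1)
      = Finset.univ.filter (fun p : Fin l × Fin l => p.2 < p.1) := by
    apply Finset.filter_congr; intro p _; constructor
    · rintro ⟨_, h⟩; exact h
    · intro h; exact ⟨fun h' => absurd h (lt_asymm h'), h⟩
  have e2 : (Finset.univ.filter fun p : Fin l × Fin l => ¬ p.1 < p.2 ∧ ¬ p.2 < p.1)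
      = Finset.univ.filter (fun p : Fin l × Fin l => p.1 = p.2) := by
    apply Finset.filter_congr; intro p _
    simp only [not_lt]
    constructor
    · rintro ⟨h1, h2⟩; exact le_antisymm h2 h1
    · intro h; simp [h]
  rw [e1, e2, hdiag, hswap] at h2
  rw [htot] at h1
  linarith

/-- For `l ≥ 2` and nonnegative integers `b_1,…,b_l` with
`∑ b_i = n + l - 1`, the multinomial coefficients satisfy
`(n+l-1 choose b_1,…,b_l) = (1/(l-1)) ∑_{i<j} (n+l-2 choose b_i+b_j-1, rest)·(b_i+b_j)!/(b_i!b_j!)`,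
where terms with `b_i + b_j = 0` are omitted. -/
theorem multinomial_cut_and_join (n l : ℕ) (hl : 2 ≤ l) (b : Fin l → ℕ)
    (hsum : ∑ k, b k = n + l - 1) :
    (Nat.factorial (n + l - 1) : ℚ) / ∏ k, (Nat.factorial (b k) : ℚ) =
      (1 / ((l : ℚ) - 1)) *
        ∑ p ∈ Finset.univ.filter (fun p : Fin l × Fin l => p.1 < p.2),
          if b p.1 + b p.2 = 0 then 0 else
            ((Nat.factorial (n + l - 2) : ℚ) /
                ((Nat.factorial (b p.1 + b p.2 - 1) : ℚ) *
                  ∏ k ∈ (Finset.univ.erase p.1).erase p.2, (Nat.factorial (b k) : ℚ))) *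
              ((Nat.factorial (b p.1 + b p.2) : ℚ) /
                ((Nat.factorial (b p.1) : ℚ) * (Nat.factorial (b p.2) : ℚ))) := by
  have hterm : ∀ p ∈ Finset.univ.filter (fun p : Fin l × Fin l => p.1 < p.2),
      (if b p.1 + b p.2 = 0 then (0:ℚ) else
        ((Nat.factorial (n + l - 2) : ℚ) /
            ((Nat.factorial (b p.1 + b p.2 - 1) : ℚ) *
              ∏ k ∈ (Finset.univ.erase p.1).erase p.2, (Nat.factorial (b k) : ℚ))) *
          ((Nat.factorial (b p.1 + b p.2) : ℚ) /
            ((Nat.factorial (b p.1) : ℚ) * (Nat.factorial (b p.2) : ℚ))))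
      = (Nat.factorial (n + l - 2) : ℚ) * ((b p.1 : ℚ) + (b p.2 : ℚ))
          / ∏ k, (Nat.factorial (b k) : ℚ) := by
    intro p hp
    simp only [Finset.mem_filter] at hp
    have hne : p.1 ≠ p.2 := ne_of_lt hp.2
    by_cases h0 : b p.1 + b p.2 = 0
    · have h1 : b p.1 = 0 := by omega
      have h2 : b p.2 = 0 := by omega
      simp [h0, h1, h2]
    · rw [if_neg h0]
      have hprod : ∏ k, (Nat.factorial (b k) : ℚ)
          = (Nat.factorial (b p.1) : ℚ) * ((Nat.factorial (b p.2) : ℚ) *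
            ∏ k ∈ (Finset.univ.erase p.1).erase p.2, (Nat.factorial (b k) : ℚ)) := by
        rw [← Finset.mul_prod_erase _ _ (Finset.mem_univ p.1),
          ← Finset.mul_prod_erase _ _ (Finset.mem_erase.mpr ⟨hne.symm, Finset.mem_univ p.2⟩)]
      have hs : b p.1 + b p.2 - 1 + 1 = b p.1 + b p.2 := by omega
      have hsf : (Nat.factorial (b p.1 + b p.2) : ℚ)
          = ((b p.1 : ℚ) + (b p.2 : ℚ)) * (Nat.factorial (b p.1 + b p.2 - 1) : ℚ) := by
        have := Nat.factorial_succ (b p.1 + b p.2 - 1)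
        rw [hs] at this
        rw [this]
        push_cast
        ring
      have hf1 : (Nat.factorial (b p.1) : ℚ) ≠ 0 := by
        exact_mod_cast (Nat.factorial_pos _).ne'
      have hf2 : (Nat.factorial (b p.2) : ℚ) ≠ 0 := by
        exact_mod_cast (Nat.factorial_pos _).ne'
      have hf3 : (Nat.factorial (b p.1 + b p.2 - 1) : ℚ) ≠ 0 := by
        exact_mod_cast (Nat.factorial_pos _).ne'
      have hf4 : ∏ k ∈ (Finset.univ.erase p.1).erase p.2, (Nat.factorial (b k) : ℚ) ≠ 0 := by
        apply Finset.prod_ne_zero_iff.mpr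
        intro k _
        exact_mod_cast (Nat.factorial_pos _).ne'
      rw [hprod, hsf]
      field_simp
  rw [Finset.sum_congr rfl hterm]
  have hS : ∑ k, (b k : ℚ) = ((n + l - 1 : ℕ) : ℚ) := by
    rw [← Nat.cast_sum, hsum]
  rw [← Finset.sum_div, ← Finset.mul_sum, pair_sum_s18, hS]
  have hfac : (Nat.factorial (n + l - 1) : ℚ)
      = ((n + l - 1 : ℕ) : ℚ) * (Nat.factorial (n + l - 2) : ℚ) := by
    have hs : n + l - 2 + 1 = n + l - 1 := by omega
    have := Nat.factorial_succ (n + l - 2)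
    rw [hs] at this
    rw [this]
    push_cast
    ring
  have hlne : (l : ℚ) - 1 ≠ 0 := by
    have : (2:ℚ) ≤ (l:ℚ) := by exact_mod_cast hl
    intro h; linarith
  have hP : ∏ k, (Nat.factorial (b k) : ℚ) ≠ 0 := by
    apply Finset.prod_ne_zero_iff.mpr
    intro k _
    exact_mod_cast (Nat.factorial_pos _).ne'
  rw [hfac]
  field_simp
end
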